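/- Let R be a ring and let C_0 denote the wide subcategory of R-modules generated by R. If X is a small object of D(R), then H_n X lies in C_0 for all integers n, and H_n X = 0 for all but finitely many n. -/

import Mathlib

open CategoryTheory CategoryTheory.Limits CategoryTheory.Pretriangulated ZeroObject

universe w u

/-- A full subcategory (given as a set of objects) of an abelian category is *wide*
if it is closed under isomorphisms, kernels, cokernels and extensions. -/
structure IsWideSubcategory {A : Type*} [Category A] [Abelian A] (C : Set A) : Prop where
  mem_of_iso : ∀ {X Y : A}, (X ≅ Y) → X ∈ C → Y ∈ C
  kernel_mem : ∀ {X Y : A} (f : X ⟶ Y), X ∈ C → Y ∈ C → kernel f ∈ C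
  cokernel_mem : ∀ {X Y : A} (f : X ⟶ Y), X ∈ C → Y ∈ C → cokernel f ∈ C
  extension_mem : ∀ (S : CategoryTheory.ShortComplex A), S.ShortExact →
    S.X₁ ∈ C → S.X₃ ∈ C → S.X₂ ∈ C

/-- The wide subcategory generated by a set of objects: the intersection of all
wide subcategories containing it. -/
def wideClosure {A : Type*} [Category A] [Abelian A] (S : Set A) : Set A :=
  ⋂₀ {C : Set A | IsWideSubcategory C ∧ S ⊆ C}

/-- `C₀`, the wide subcategory of `R`-modules generated by the module `R`. -/
def wideSubcatGenByRing (R : Type u) [Ring R] : Set (ModuleCat.{u} R) :=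
  wideClosure {ModuleCat.of R R}

/-- A thick subcategory of a (pre)triangulated category: a full triangulated
subcategory closed under retracts (direct summands). -/
structure IsThickSubcategory {T : Type*} [Category T] [HasZeroObject T] [Preadditive T]
    [HasShift T ℤ] [∀ n : ℤ, (shiftFunctor T n).Additive] [Pretriangulated T]
    (D : Set T) : Prop where
  mem_of_iso : ∀ {X Y : T}, (X ≅ Y) → X ∈ D → Y ∈ D
  zero_mem : (0 : T) ∈ D
  shift_mem : ∀ (X : T) (n : ℤ), X ∈ D → X⟦n⟧ ∈ D
  ext₂ : ∀ (T' : Triangle T), T' ∈ (distTriang T) → T'.obj₁ ∈ D → T'.obj₃ ∈ D → T'.obj₂ ∈ D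
  retract_mem : ∀ (X Y : T) (i : X ⟶ Y) (r : Y ⟶ X), i ≫ r = 𝟙 X → Y ∈ D → X ∈ D

/-- An object of the derived category of `R`-modules is *small* if it belongs to every
thick subcategory containing the complex `S⁰R` (`R` concentrated in degree `0`), i.e. to
the thick subcategory generated by `S⁰R`; equivalently, `Hom(X,-)` commutes with
arbitrary direct sums. -/
def IsSmallObject {R : Type u} [Ring R] [HasDerivedCategory.{w} (ModuleCat.{u} R)]
    (X : DerivedCategory (ModuleCat.{u} R)) : Prop :=
  ∀ D : Set (DerivedCategory (ModuleCat.{u} R)), IsThickSubcategory D →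
    (DerivedCategory.singleFunctor (ModuleCat.{u} R) 0).obj (ModuleCat.of R R) ∈ D → X ∈ D

section WideLemmas

lemma isWide_wideClosure {A : Type*} [Category A] [Abelian A] (S : Set A) :
    IsWideSubcategory (wideClosure S) where
  mem_of_iso e hX := fun C hC => hC.1.mem_of_iso e (hX C hC)
  kernel_mem f hX hY := fun C hC => hC.1.kernel_mem f (hX C hC) (hY C hC)
  cokernel_mem f hX hY := fun C hC => hC.1.cokernel_mem f (hX C hC) (hY C hC)
  extension_mem S' hS h1 h3 := fun C hC => hC.1.extension_mem S' hS (h1 C hC) (h3 C hC)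

lemma subset_wideClosure {A : Type*} [Category A] [Abelian A] (S : Set A) :
    S ⊆ wideClosure S := fun _ hx _ hC => hC.2 hx

section
variable {A : Type*} [Category A] [Abelian A] {C : Set A} (hC : IsWideSubcategory C)
include hC

lemma IsWideSubcategory.zero_mem' {M Z : A} (hM : M ∈ C) (hZ : IsZero Z) : Z ∈ C :=
  hC.mem_of_iso ((kernel.ofMono (𝟙 M)).trans ((isZero_zero A).iso hZ)) (hC.kernel_mem _ hM hM)

lemma IsWideSubcategory.retract_mem' {X Y : A} (i : X ⟶ Y) (r : Y ⟶ X) (hir : i ≫ r = 𝟙 X)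
    (hY : Y ∈ C) : X ∈ C := by
  refine hC.mem_of_iso (Iso.symm ?_) (hC.kernel_mem (𝟙 Y - r ≫ i) hY hY)
  refine ⟨kernel.lift _ i (by
      rw [Preadditive.comp_sub, Category.comp_id, ← Category.assoc, hir,
        Category.id_comp, sub_self]), kernel.ι _ ≫ r, ?_, ?_⟩
  · rw [← Category.assoc, kernel.lift_ι, hir]
  · have h := kernel.condition (𝟙 Y - r ≫ i)
    rw [Preadditive.comp_sub, Category.comp_id, sub_eq_zero] at h
    rw [← cancel_mono (kernel.ι (𝟙 Y - r ≫ i))]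
    simp only [Category.assoc, kernel.lift_ι, Category.id_comp]
    exact h.symm

end

section
variable {R : Type u} [Ring R] {C : Set (ModuleCat.{u} R)} (hC : IsWideSubcategory C)
include hC

lemma IsWideSubcategory.ker_mem {M N : ModuleCat.{u} R} (f : M ⟶ N) (hM : M ∈ C) (hN : N ∈ C) :
    ModuleCat.of R (LinearMap.ker f.hom) ∈ C :=
  hC.mem_of_iso (ModuleCat.kernelIsoKer f) (hC.kernel_mem f hM hN)

lemma IsWideSubcategory.coker_mem {M N : ModuleCat.{u} R} (f : M ⟶ N) (hM : M ∈ C)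
    (hN : N ∈ C) : ModuleCat.of R (N ⧸ LinearMap.range f.hom) ∈ C :=
  hC.mem_of_iso (ModuleCat.cokernelIsoRangeQuotient f) (hC.cokernel_mem f hM hN)

lemma IsWideSubcategory.middle_mem {W A B C' V : ModuleCat.{u} R} (w : W ⟶ A) (f : A ⟶ B)
    (g : B ⟶ C') (v : C' ⟶ V) (h1 : LinearMap.range w.hom = LinearMap.ker f.hom)
    (h2 : LinearMap.range f.hom = LinearMap.ker g.hom) (h3 : LinearMap.range g.hom = LinearMap.ker v.hom)
    (hW : W ∈ C) (hA : A ∈ C) (hC' : C' ∈ C) (hV : V ∈ C) : B ∈ C := by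
  have hker : ModuleCat.of R (LinearMap.ker g.hom) ∈ C := by
    have e : (A ⧸ LinearMap.range w.hom) ≃ₗ[R] LinearMap.ker g.hom :=
      (Submodule.quotEquivOfEq _ _ h1).trans
        (f.hom.quotKerEquivRange.trans (LinearEquiv.ofEq _ _ h2))
    exact hC.mem_of_iso e.toModuleIso (hC.coker_mem w hW hA)
  have hcoker : ModuleCat.of R (LinearMap.range g.hom) ∈ C :=
    hC.mem_of_iso (LinearEquiv.ofEq _ _ h3.symm).toModuleIso (hC.ker_mem v hC' hV)
  let S : ShortComplex (ModuleCat.{u} R) :=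
    ShortComplex.mk (ModuleCat.ofHom (LinearMap.ker g.hom).subtype)
      (ModuleCat.ofHom g.hom.rangeRestrict)
      (by ext x; exact LinearMap.mem_ker.mp x.2)
  have hS : S.ShortExact := by
    have : Mono S.f := (ModuleCat.mono_iff_injective _).2 (Submodule.injective_subtype _)
    have : Epi S.g := (ModuleCat.epi_iff_surjective _).2 g.hom.surjective_rangeRestrict
    refine ⟨?_⟩
    rw [ShortComplex.moduleCat_exact_iff]
    intro x hx
    have : g.hom x = 0 := congrArg Subtype.val hx
    exact ⟨⟨x, this⟩, rfl⟩
  exact hC.extension_mem S hS hker hcoker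

end

end WideLemmas

section Main

variable {R : Type u} [Ring R] [HasDerivedCategory.{w} (ModuleCat.{u} R)]

/-- abbreviation for the homology functor -/
noncomputable abbrev Hgl (R : Type u) [Ring R] [HasDerivedCategory.{w} (ModuleCat.{u} R)]
    (n : ℤ) : DerivedCategory (ModuleCat.{u} R) ⥤ ModuleCat.{u} R :=
  DerivedCategory.homologyFunctor (ModuleCat.{u} R) n

/-- The shift compatibility isomorphism for homology on the derived category. -/
noncomputable def homologyShiftIso (X : DerivedCategory (ModuleCat.{u} R)) (k n : ℤ) :
    (Hgl R n).obj (X⟦k⟧) ≅ (Hgl R (k + n)).obj X :=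
  ((DerivedCategory.homologyFunctor (ModuleCat.{u} R) 0).shiftIso k n (k + n) rfl).app X

/-- Corollary 1.3: if `X` is a small object of the derived category
`D(R)`, then each homology module `Hₙ X` lies in `C₀`, the wide subcategory generated
by `R`, and `Hₙ X = 0` for all but finitely many `n`. -/
theorem homology_of_small (R : Type u) [Ring R] [HasDerivedCategory.{w} (ModuleCat.{u} R)]
    (X : DerivedCategory (ModuleCat.{u} R)) (hX : IsSmallObject X) :
    (∀ n : ℤ, (DerivedCategory.homologyFunctor (ModuleCat.{u} R) n).obj X ∈
      wideSubcatGenByRing R) ∧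
    {n : ℤ | ¬ IsZero ((DerivedCategory.homologyFunctor (ModuleCat.{u} R) n).obj X)}.Finite := by
  set C₀ := wideSubcatGenByRing R with hC₀def
  have hC₀ : IsWideSubcategory C₀ := isWide_wideClosure _
  have hR : ModuleCat.of R R ∈ C₀ := subset_wideClosure _ rfl
  set D : Set (DerivedCategory (ModuleCat.{u} R)) :=
    {Y | (∀ n : ℤ, (Hgl R n).obj Y ∈ C₀) ∧
      {n : ℤ | ¬ IsZero ((Hgl R n).obj Y)}.Finite} with hDdef
  have hD : IsThickSubcategory D := by
    constructor
    · -- mem_of_iso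
      rintro Y Z e ⟨h1, h2⟩
      refine ⟨fun n => hC₀.mem_of_iso ((Hgl R n).mapIso e) (h1 n), h2.subset ?_⟩
      intro n hn h
      exact hn (h.of_iso ((Hgl R n).mapIso e.symm))
    · -- zero_mem
      refine ⟨fun n => hC₀.zero_mem' hR ((Hgl R n).map_isZero (isZero_zero _)), ?_⟩
      convert Set.finite_empty
      ext n
      simp only [Set.mem_setOf_eq, Set.mem_empty_iff_false, iff_false, not_not]
      exact (Hgl R n).map_isZero (isZero_zero _)
    · -- shift_mem
      rintro Y k ⟨h1, h2⟩
      refine ⟨fun n => hC₀.mem_of_iso (homologyShiftIso Y k n).symm (h1 (k + n)), ?_⟩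
      refine (h2.image (fun m => m - k)).subset ?_
      intro n hn
      refine ⟨k + n, ?_, by ring⟩
      intro h
      exact hn (h.of_iso (homologyShiftIso Y k n))
    · -- ext₂
      rintro T hT ⟨h11, h12⟩ ⟨h31, h32⟩
      constructor
      · intro n
        have e1 := (DerivedCategory.HomologySequence.exact₁ T hT (n - 1) n
          (by ring)).moduleCat_range_eq_ker
        have e2 := (DerivedCategory.HomologySequence.exact₂ T hT n).moduleCat_range_eq_ker
        have e3 := (DerivedCategory.HomologySequence.exact₃ T hT n (n + 1)
          rfl).moduleCat_range_eq_ker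
        exact hC₀.middle_mem _ _ _ _ e1 e2 e3 (h31 (n - 1)) (h11 n) (h31 n) (h11 (n + 1))
      · refine (h12.union h32).subset ?_
        intro n hn
        by_contra h
        simp only [Set.mem_union, Set.mem_setOf_eq, not_or, not_not] at h
        refine hn ?_
        exact (DerivedCategory.HomologySequence.exact₂ T hT n).isZero_X₂
          (h.1.eq_of_src _ _) (h.2.eq_of_tgt _ _)
    · -- retract_mem
      rintro Y Z i r hir ⟨h1, h2⟩
      constructor
      · intro n
        exact hC₀.retract_mem' ((Hgl R n).map i) ((Hgl R n).map r)
          (by rw [← Functor.map_comp, hir, CategoryTheory.Functor.map_id]) (h1 n)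
      · refine h2.subset ?_
        intro n hn
        by_contra h
        simp only [Set.mem_setOf_eq, not_not] at h
        refine hn ?_
        rw [IsZero.iff_id_eq_zero, ← CategoryTheory.Functor.map_id, ← hir, Functor.map_comp,
          h.eq_of_tgt ((Hgl R n).map i) 0, zero_comp]
  -- the single object is in D
  have hsingle : (DerivedCategory.singleFunctor (ModuleCat.{u} R) 0).obj (ModuleCat.of R R) ∈ D := by
    have e0 : (DerivedCategory.singleFunctor (ModuleCat.{u} R) 0).obj (ModuleCat.of R R) ≅
        DerivedCategory.Q.obj
          ((CochainComplex.singleFunctor (ModuleCat.{u} R) 0).obj (ModuleCat.of R R)) :=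
      ((SingleFunctors.evaluation _ _ 0).mapIso
        (DerivedCategory.singleFunctorsPostcompQIso (ModuleCat.{u} R))).app _
    have e1 : ∀ n : ℤ, (Hgl R n).obj
        ((DerivedCategory.singleFunctor (ModuleCat.{u} R) 0).obj (ModuleCat.of R R)) ≅
        ((CochainComplex.singleFunctor (ModuleCat.{u} R) 0).obj (ModuleCat.of R R)).homology n :=
      fun n => (Hgl R n).mapIso e0 ≪≫
        (DerivedCategory.homologyFunctorFactors (ModuleCat.{u} R) n).app _
    have hz : ∀ n : ℤ, n ≠ 0 → IsZero ((Hgl R n).obj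
        ((DerivedCategory.singleFunctor (ModuleCat.{u} R) 0).obj (ModuleCat.of R R))) :=
      fun n hn => (HomologicalComplex.isZero_single_obj_homology _ _ _ _ hn).of_iso (e1 n)
    constructor
    · intro n
      by_cases hn : n = 0
      · subst hn
        exact hC₀.mem_of_iso
          (e1 0 ≪≫ HomologicalComplex.singleObjHomologySelfIso _ _ _).symm hR
      · exact hC₀.zero_mem' hR (hz n hn)
    · refine (Set.finite_singleton (0 : ℤ)).subset ?_
      intro n hn
      by_contra h
      exact hn (hz n (by simpa using h))
  exact hX D hD hsingle


end Main
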